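/- There exists a nonzero polynomial P ∈ ℂ[λ,μ] such that whenever P(λ,μ) ≠ 0 and (q,a,c,d) ∈ ℂ⁴ satisfies q² + 2λq + 1 = 0, a(1 + λq) = −(λ + q), 2μcd = 3a² + 3, and c² + d² + 2a² − 2λa + 2 = 0, the orbit of the plane W(q,a,c,d) under the combined action of G' × H' on subspaces of ℂ⁸ has exactly 256 elements, each of which is a line on X_{λ,μ}; moreover, if g ∈ G' and h ∈ H' satisfy g·(h·W(q,a,c,d)) = W(q,a,c,d), then g·W(q,a,c,d) = W(q,a,c,d) and h·W(q,a,c,d) = W(q,a,c,d). -/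

import Mathlib

noncomputable section

/-- `Q₁ = x₀²+x₁²+x₂²+x₃²+x₄²+x₅² − 2μx₆x₇`. -/
def Q1 (m : ℂ) (x : Fin 8 → ℂ) : ℂ :=
  x 0 ^ 2 + x 1 ^ 2 + x 2 ^ 2 + x 3 ^ 2 + x 4 ^ 2 + x 5 ^ 2 - 2 * m * x 6 * x 7

/-- `Q₂ = x₀²+x₁²+x₂²+x₃²+x₆²+x₇² − 2λx₄x₅`. -/
def Q2 (l : ℂ) (x : Fin 8 → ℂ) : ℂ :=
  x 0 ^ 2 + x 1 ^ 2 + x 2 ^ 2 + x 3 ^ 2 + x 6 ^ 2 + x 7 ^ 2 - 2 * l * x 4 * x 5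

/-- `Q₃ = x₀²+x₁²+x₄²+x₅²+x₆²+x₇² − 2λx₂x₃`. -/
def Q3 (l : ℂ) (x : Fin 8 → ℂ) : ℂ :=
  x 0 ^ 2 + x 1 ^ 2 + x 4 ^ 2 + x 5 ^ 2 + x 6 ^ 2 + x 7 ^ 2 - 2 * l * x 2 * x 3

/-- `Q₄ = x₂²+x₃²+x₄²+x₅²+x₆²+x₇² − 2λx₀x₁`. -/
def Q4 (l : ℂ) (x : Fin 8 → ℂ) : ℂ :=
  x 2 ^ 2 + x 3 ^ 2 + x 4 ^ 2 + x 5 ^ 2 + x 6 ^ 2 + x 7 ^ 2 - 2 * l * x 0 * x 1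

/-- The plane `W(q,a,c,d) ⊆ ℂ⁸` spanned by `u = (1,q,ω,ωq,ω²,ω²q,0,0)` and
`v = (a,1,a,1,a,1,c,d)`, for `ω` a primitive cube root of unity. -/
def linePlane8 (w q a c d : ℂ) : Submodule ℂ (Fin 8 → ℂ) :=
  Submodule.span ℂ
    {![1, q, w, w * q, w ^ 2, w ^ 2 * q, 0, 0], ![a, 1, a, 1, a, 1, c, d]}

/-- The system of equations characterizing the 8 lines of Lemma 4.1. -/
def lineEqs8 (l m q a c d : ℂ) : Prop :=
  q ^ 2 + 2 * l * q + 1 = 0 ∧ a * (1 + l * q) = -(l + q) ∧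
    2 * m * c * d = 3 * a ^ 2 + 3 ∧ c ^ 2 + d ^ 2 + 2 * a ^ 2 - 2 * l * a + 2 = 0

/-- The subgroup `G' ≤ S₈` generated by the transpositions `(0 1)`, `(2 3)`, `(4 5)`,
`(6 7)` and by the simultaneous block permutations of the pairs `{0,1}`, `{2,3}`,
`{4,5}` (the parallel copy of `S₃`, generated by its two block transpositions
`(0 2)(1 3)` and `(2 4)(3 5)`). -/
def Gperm8 : Subgroup (Equiv.Perm (Fin 8)) :=
  Subgroup.closure
    {Equiv.swap 0 1, Equiv.swap 2 3, Equiv.swap 4 5, Equiv.swap 6 7,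
      Equiv.swap 0 2 * Equiv.swap 1 3, Equiv.swap 2 4 * Equiv.swap 3 5}

/-- The subgroup `H' ≤ (ℂˣ)⁸` generated by `ε₁, ε₂, ε₃`. -/
def Hsigns8 : Subgroup (Fin 8 → ℂˣ) :=
  Subgroup.closure
    {![-1, -1, 1, 1, 1, 1, 1, 1], ![1, 1, -1, -1, 1, 1, 1, 1],
      ![1, 1, 1, 1, -1, -1, 1, 1]}

/-- Componentwise multiplication by `h ∈ (ℂˣ)⁸` as a linear map. -/
def diagMap8 (h : Fin 8 → ℂˣ) : (Fin 8 → ℂ) →ₗ[ℂ] (Fin 8 → ℂ) :=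
  LinearMap.pi fun i => (h i : ℂ) • LinearMap.proj i

/-- Coordinate permutation `x ↦ x ∘ σ` as a linear map. -/
def permMap8 (σ : Equiv.Perm (Fin 8)) : (Fin 8 → ℂ) →ₗ[ℂ] (Fin 8 → ℂ) :=
  LinearMap.funLeft ℂ ℂ σ

end

/-!
Write `ℂ⁸` as three coordinate pairs `{0,1}, {2,3}, {4,5}` ("blocks") and the tail `{6,7}`.
Every element of `G'` permutes the blocks by some `π ∈ S₃`, swaps inside the blocks in a set
`t`, and possibly swaps the tail; every element of `H'` is a sign pattern `s` on the blocks.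
Thus the `768` transformed planes are the spans of two explicit vectors depending on
`(π, t, s, e)`. The quadrics are invariant under `G'` and `H'`, so only `W` itself has to be
checked to lie on `X_{λ,μ}`. Comparing coordinates shows that two transformed planes coincide
exactly when their data differ by a cyclic rotation of the blocks, which only rescales `u` by a
power of `ω`. The stabiliser of `W` is therefore the rotation group of order `3`, and the orbit
has `768 / 3 = 256` elements. Outside `λ (λ² - 1) (μ² - 1) = 0` the equations force `q ≠ 0`,
`q² ≠ 1`, `c, d ≠ 0` and `c² ≠ d²`, which is all the coordinate comparison needs.
-/

open Equiv

lemma IsPrimitiveRoot.pow_val_add {M : Type*} [CommMonoid M] {ζ : M} {n : ℕ} [NeZero n]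
    (hζ : IsPrimitiveRoot ζ n) (x y : Fin n) :
    ζ ^ ((x + y : Fin n) : ℕ) = ζ ^ (x : ℕ) * ζ ^ (y : ℕ) := by
  have h := pow_mod_orderOf (x := ζ) (n := x + y)
  rwa [← hζ.eq_orderOf, ← Fin.val_add, pow_add] at h

lemma IsPrimitiveRoot.eq_add_of_pow_val_eq_mul {M : Type*} [CommMonoid M] {ζ : M}
    {n : ℕ} [NeZero n] (hζ : IsPrimitiveRoot ζ n) {ι : Type*} {f g : ι → Fin n} {α : M}
    (h : ∀ i, ζ ^ (f i : ℕ) = α * ζ ^ (g i : ℕ)) (i₀ i : ι) : f i = g i + (f i₀ - g i₀) := by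
  have key : ζ ^ ((f i + g i₀ : Fin n) : ℕ) = ζ ^ ((g i + f i₀ : Fin n) : ℕ) := by
    rw [hζ.pow_val_add, hζ.pow_val_add, h, h]
    ac_rfl
  have := Fin.ext (hζ.pow_inj (Fin.is_lt _) (Fin.is_lt _) key)
  rw [← add_sub_assoc, ← this, add_sub_cancel_right]

lemma exists_eq_smul_of_mem_span_pair {ι K : Type*} [Field K] {u₁ v₁ u₂ : ι → K} {i : ι}
    (hu : u₂ ∈ Submodule.span K {u₁, v₁}) (hu₁ : u₁ i = 0) (hu₂ : u₂ i = 0) (hv₁ : v₁ i ≠ 0) :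
    ∃ α : K, u₂ = α • u₁ := by
  obtain ⟨α, β, rfl⟩ := Submodule.mem_span_pair.mp hu
  have hβ : β = 0 := by simpa [hu₁, hv₁] using hu₂
  exact ⟨α, by simp [hβ]⟩

namespace LinesOnX

section BlockCoordinates

variable {α β : Type*}

def blockIdx (b : Fin 3) (r : Bool) : Fin 8 := ⟨2 * b + r.toNat, by cases r <;> simp <;> omega⟩

def tailIdx (r : Bool) : Fin 8 := cond r 7 6

def blockVec (f : Fin 3 → Bool → α) (g : Bool → α) : Fin 8 → α :=
  ![f 0 false, f 0 true, f 1 false, f 1 true, f 2 false, f 2 true, g false, g true]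

@[simp]
lemma blockVec_blockIdx (f : Fin 3 → Bool → α) (g : Bool → α) (b : Fin 3) (r : Bool) :
    blockVec f g (blockIdx b r) = f b r := by
  fin_cases b <;> cases r <;> rfl

@[simp]
lemma blockVec_tailIdx (f : Fin 3 → Bool → α) (g : Bool → α) (r : Bool) :
    blockVec f g (tailIdx r) = g r := by
  cases r <;> rfl

lemma blockVec_eta (x : Fin 8 → α) :
    blockVec (fun b r => x (blockIdx b r)) (fun r => x (tailIdx r)) = x := by
  funext i; fin_cases i <;> rfl

lemma comp_blockVec (φ : α → β) (f : Fin 3 → Bool → α) (g : Bool → α) :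
    φ ∘ blockVec f g = blockVec (fun b r => φ (f b r)) (φ ∘ g) := by
  funext i; fin_cases i <;> rfl

lemma blockVec_mul [Mul α] (f f' : Fin 3 → Bool → α) (g g' : Bool → α) :
    blockVec f g * blockVec f' g' =
      blockVec (fun b r => f b r * f' b r) (fun r => g r * g' r) := by
  funext i; fin_cases i <;> rfl

lemma smul_blockVec [Mul α] (z : α) (f : Fin 3 → Bool → α) (g : Bool → α) :
    z • blockVec f g = blockVec (fun b r => z * f b r) (fun r => z * g r) :=
  comp_blockVec (z * ·) f g

end BlockCoordinates

section Permutations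

def blockPerm (π : Perm (Fin 3)) (t : Fin 3 → Bool) (e : Bool) : Fin 8 → Fin 8 :=
  blockVec (fun b r => blockIdx (π b) (r ^^ t b)) (fun r => tailIdx (r ^^ e))

lemma blockVec_comp_blockPerm {α : Type*} (f : Fin 3 → Bool → α) (g : Bool → α)
    (π : Perm (Fin 3)) (t : Fin 3 → Bool) (e : Bool) :
    blockVec f g ∘ blockPerm π t e =
      blockVec (fun b r => f (π b) (r ^^ t b)) (fun r => g (r ^^ e)) := by
  rw [blockPerm, comp_blockVec]
  simp only [blockVec_blockIdx, Function.comp_def, blockVec_tailIdx]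

lemma blockPerm_comp_blockPerm (π₁ π₂ : Perm (Fin 3)) (t₁ t₂ : Fin 3 → Bool) (e₁ e₂ : Bool) :
    blockPerm π₁ t₁ e₁ ∘ blockPerm π₂ t₂ e₂ =
      blockPerm (π₁ * π₂) (fun b => t₂ b ^^ t₁ (π₂ b)) (e₂ ^^ e₁) := by
  rw [show blockPerm π₁ t₁ e₁ = blockVec _ _ from rfl, blockVec_comp_blockPerm]
  simp only [blockPerm, Perm.mul_apply, Bool.xor_assoc]

lemma blockPerm_one : blockPerm 1 (fun _ => false) false = id := by
  simp only [blockPerm, Perm.one_apply, Bool.xor_false]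
  exact blockVec_eta id

lemma blockPerm_comp_blockPerm_inv (π : Perm (Fin 3)) (t : Fin 3 → Bool) (e : Bool) :
    blockPerm π t e ∘ blockPerm π⁻¹ (fun b => t (π⁻¹ b)) e = id := by
  rw [blockPerm_comp_blockPerm, ← blockPerm_one]
  simp

lemma exists_blockPerm_of_mem_Gperm8 {σ : Perm (Fin 8)} (hσ : σ ∈ Gperm8) :
    ∃ π t e, ⇑σ = blockPerm π t e := by
  induction hσ using Subgroup.closure_induction with
  | mem g hg =>
    rcases hg with rfl | rfl | rfl | rfl | rfl | rfl
    · exact ⟨1, ![true, false, false], false, by decide⟩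
    · exact ⟨1, ![false, true, false], false, by decide⟩
    · exact ⟨1, ![false, false, true], false, by decide⟩
    · exact ⟨1, fun _ => false, true, by decide⟩
    · exact ⟨swap 0 1, fun _ => false, false, by decide⟩
    · exact ⟨swap 1 2, fun _ => false, false, by decide⟩
  | one => exact ⟨1, fun _ => false, false, blockPerm_one.symm⟩
  | mul σ τ _ _ hσ hτ =>
    obtain ⟨π₁, t₁, e₁, h₁⟩ := hσ
    obtain ⟨π₂, t₂, e₂, h₂⟩ := hτ
    exact ⟨_, _, _, by rw [Perm.coe_mul, h₁, h₂, blockPerm_comp_blockPerm]⟩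
  | inv σ _ hσ =>
    obtain ⟨π, t, e, h⟩ := hσ
    refine ⟨π⁻¹, fun b => t (π⁻¹ b), e, funext fun i => Perm.inv_eq_iff_eq.mpr ?_⟩
    rw [h]
    exact (congrFun (blockPerm_comp_blockPerm_inv π t e) i).symm

lemma exists_mem_Gperm8_coe_eq_blockPerm_false (π : Perm (Fin 3)) :
    ∃ σ ∈ Gperm8, ⇑σ = blockPerm π (fun _ => false) false := by
  have hπ : π ∈ Submonoid.closure (Set.range fun i : Fin 2 => swap i.castSucc i.succ) := by
    rw [Perm.mclosure_swap_castSucc_succ]; trivial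
  induction hπ using Submonoid.closure_induction with
  | mem π hπ =>
    obtain ⟨i, rfl⟩ := hπ
    fin_cases i
    · exact ⟨swap 0 2 * swap 1 3, Subgroup.subset_closure (by simp), by decide⟩
    · exact ⟨swap 2 4 * swap 3 5, Subgroup.subset_closure (by simp), by decide⟩
  | one => exact ⟨1, one_mem _, blockPerm_one.symm⟩
  | mul π₁ π₂ _ _ h₁ h₂ =>
    obtain ⟨σ₁, hσ₁, h₁⟩ := h₁
    obtain ⟨σ₂, hσ₂, h₂⟩ := h₂
    refine ⟨σ₁ * σ₂, mul_mem hσ₁ hσ₂, ?_⟩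
    rw [Perm.coe_mul, h₁, h₂, blockPerm_comp_blockPerm]
    simp

lemma exists_mem_Gperm8_coe_eq_blockPerm_one (t : Fin 3 → Bool) (e : Bool) :
    ∃ σ ∈ Gperm8, ⇑σ = blockPerm 1 t e := by
  have cond_mem : ∀ (x : Bool) {g}, g ∈ Gperm8 → cond x g 1 ∈ Gperm8 := by
    intro x g hg; cases x
    exacts [one_mem _, hg]
  refine ⟨cond (t 0) (swap 0 1) 1 * cond (t 1) (swap 2 3) 1 * cond (t 2) (swap 4 5) 1 *
    cond e (swap 6 7) 1, ?_, ?_⟩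
  · refine mul_mem (mul_mem (mul_mem ?_ ?_) ?_) ?_ <;>
      exact cond_mem _ (Subgroup.subset_closure (by simp))
  · revert t e; decide

lemma exists_mem_Gperm8_coe_eq (π : Perm (Fin 3)) (t : Fin 3 → Bool) (e : Bool) :
    ∃ σ ∈ Gperm8, ⇑σ = blockPerm π t e := by
  obtain ⟨σ₁, hσ₁, h₁⟩ := exists_mem_Gperm8_coe_eq_blockPerm_false π
  obtain ⟨σ₂, hσ₂, h₂⟩ := exists_mem_Gperm8_coe_eq_blockPerm_one t e
  refine ⟨σ₁ * σ₂, mul_mem hσ₁ hσ₂, ?_⟩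
  rw [Perm.coe_mul, h₁, h₂, blockPerm_comp_blockPerm]
  simp

end Permutations

section Signs

def boolSign (x : Bool) : ℂˣ := cond x (-1) 1

lemma boolSign_mul (x y : Bool) : boolSign x * boolSign y = boolSign (x ^^ y) := by
  cases x <;> cases y <;> simp [boolSign]

lemma coe_boolSign (x : Bool) : (boolSign x : ℂ) = cond x (-1) 1 := by
  cases x <;> simp [boolSign]

lemma boolSign_ne_zero (x : Bool) : (boolSign x : ℂ) ≠ 0 := Units.ne_zero _

lemma eq_and_eq_zero_or_eq_neg_two_of_boolSign_eq {x y : Bool} {z : ℂ}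
    (h : (boolSign x : ℂ) = z * boolSign y + boolSign y) : (x = y ∧ z = 0) ∨ z = -2 := by
  cases x <;> cases y <;> simp only [coe_boolSign, cond] at h
  · exact .inl ⟨rfl, by linear_combination -h⟩
  · exact .inr (by linear_combination h)
  · exact .inr (by linear_combination -h)
  · exact .inl ⟨rfl, by linear_combination h⟩

def blockSigns (s : Fin 3 → Bool) : Fin 8 → ℂˣ :=
  blockVec (fun b _ => boolSign (s b)) (fun _ => 1)

lemma blockSigns_mul (s₁ s₂ : Fin 3 → Bool) :
    blockSigns s₁ * blockSigns s₂ = blockSigns (fun b => s₁ b ^^ s₂ b) := by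
  simp only [blockSigns, blockVec_mul, boolSign_mul, mul_one]

lemma blockSigns_false : blockSigns (fun _ => false) = 1 := by
  funext i; fin_cases i <;> rfl

lemma exists_blockSigns_of_mem_Hsigns8 {h : Fin 8 → ℂˣ} (hh : h ∈ Hsigns8) :
    ∃ s, h = blockSigns s := by
  induction hh using Subgroup.closure_induction with
  | mem g hg =>
    rcases hg with rfl | rfl | rfl
    · exact ⟨![true, false, false], by funext i; fin_cases i <;> rfl⟩
    · exact ⟨![false, true, false], by funext i; fin_cases i <;> rfl⟩
    · exact ⟨![false, false, true], by funext i; fin_cases i <;> rfl⟩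
  | one => exact ⟨fun _ => false, blockSigns_false.symm⟩
  | mul h₁ h₂ _ _ hh₁ hh₂ =>
    obtain ⟨s₁, rfl⟩ := hh₁
    obtain ⟨s₂, rfl⟩ := hh₂
    exact ⟨_, blockSigns_mul s₁ s₂⟩
  | inv h _ hh =>
    obtain ⟨s, rfl⟩ := hh
    refine ⟨s, inv_eq_of_mul_eq_one_left ?_⟩
    rw [blockSigns_mul, ← blockSigns_false]
    simp

lemma blockSigns_mem_Hsigns8 (s : Fin 3 → Bool) : blockSigns s ∈ Hsigns8 := by
  have basis : ∀ (x : Bool) (i : Fin 3), blockSigns (fun b => x && b == i) ∈ Hsigns8 := by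
    intro x i
    cases x
    · simp [blockSigns_false, one_mem]
    · apply Subgroup.subset_closure
      fin_cases i
      · left; funext j; fin_cases j <;> rfl
      · right; left; funext j; fin_cases j <;> rfl
      · right; right; funext j; fin_cases j <;> rfl
  have hs : s = fun b => (s 0 && b == 0) ^^ (s 1 && b == 1) ^^ (s 2 && b == 2) := by
    funext b; fin_cases b <;> simp
  rw [hs, ← blockSigns_mul, ← blockSigns_mul]
  exact mul_mem (mul_mem (basis _ _) (basis _ _)) (basis _ _)

end Signs

section Quadrics

def IsOnX (l m : ℂ) (x : Fin 8 → ℂ) : Prop :=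
  Q1 m x = 0 ∧ Q2 l x = 0 ∧ Q3 l x = 0 ∧ Q4 l x = 0

lemma permMap8_apply (σ : Perm (Fin 8)) (x : Fin 8 → ℂ) : permMap8 σ x = x ∘ σ := rfl

lemma diagMap8_apply (h : Fin 8 → ℂˣ) (x : Fin 8 → ℂ) (i : Fin 8) :
    diagMap8 h x i = h i * x i := rfl

lemma isOnX_permMap8_iff {σ : Perm (Fin 8)} (hσ : σ ∈ Gperm8) (l m : ℂ) (x : Fin 8 → ℂ) :
    IsOnX l m (permMap8 σ x) ↔ IsOnX l m x := by
  induction hσ using Subgroup.closure_induction generalizing x with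
  | mem g hg =>
    have hgg : g * g = 1 := by rcases hg with rfl | rfl | rfl | rfl | rfl | rfl <;> decide
    suffices h : ∀ y, IsOnX l m y → IsOnX l m (permMap8 g y) by
      refine ⟨fun hx => ?_, h x⟩
      simpa [permMap8_apply, Function.comp_assoc, ← Perm.coe_mul, hgg] using h _ hx
    rintro y ⟨h1, h2, h3, h4⟩
    simp only [Q1, Q2, Q3, Q4] at h1 h2 h3 h4
    -- each generator fixes `Q₁` and permutes `Q₂, Q₃, Q₄`
    rcases hg with rfl | rfl | rfl | rfl | rfl | rfl <;>
      simp (disch := decide) only [IsOnX, Q1, Q2, Q3, Q4, permMap8_apply, Function.comp_apply,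
        Perm.coe_mul, swap_apply_left, swap_apply_right, swap_apply_of_ne_of_ne] <;>
      refine ⟨?_, ?_, ?_, ?_⟩ <;>
      first
        | linear_combination h1 | linear_combination h2
        | linear_combination h3 | linear_combination h4
  | one => rfl
  | mul σ τ _ _ hσ hτ =>
    rw [show permMap8 (σ * τ) x = permMap8 τ (permMap8 σ x) from rfl, hτ, hσ]
  | inv σ _ hσ =>
    rw [← hσ, permMap8_apply, permMap8_apply, Function.comp_assoc, ← Perm.coe_mul,
      inv_mul_cancel, Perm.coe_one, Function.comp_id]

lemma isOnX_diagMap8_iff {h : Fin 8 → ℂˣ} (hh : h ∈ Hsigns8) (l m : ℂ) (x : Fin 8 → ℂ) :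
    IsOnX l m (diagMap8 h x) ↔ IsOnX l m x := by
  obtain ⟨s, rfl⟩ := exists_blockSigns_of_mem_Hsigns8 hh
  simp only [IsOnX, Q1, Q2, Q3, Q4, diagMap8_apply, blockSigns, blockVec]
  generalize s 0 = s₀, s 1 = s₁, s 2 = s₂
  cases s₀ <;> cases s₁ <;> cases s₂ <;> simp [boolSign]

lemma isOnX_of_mem_linePlane8 {w l m q a c d : ℂ} (hw : IsPrimitiveRoot w 3)
    (h : lineEqs8 l m q a c d) {x : Fin 8 → ℂ} (hx : x ∈ linePlane8 w q a c d) :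
    IsOnX l m x := by
  obtain ⟨heq1, heq2, heq3, heq4⟩ := h
  obtain ⟨α, β, rfl⟩ := Submodule.mem_span_pair.mp hx
  have hw₁ : w ^ 2 + w + 1 = 0 := by
    have := hw.geom_sum_eq_zero (by norm_num)
    simp only [Finset.sum_range_succ, Finset.sum_range_zero] at this
    linear_combination this
  -- summing over the blocks produces `∑ ω ^ b = ω² + ω + 1` and
  -- `∑ ω ^ (2 b) = (ω² + ω + 1) (ω² - ω + 1)`
  set S := α ^ 2 * (1 + q ^ 2) * (w ^ 2 - w + 1) + 2 * α * β * (a + q)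
  simp only [IsOnX, Q1, Q2, Q3, Q4, Pi.add_apply, Pi.smul_apply, smul_eq_mul]
  simp
  refine ⟨?_, ?_, ?_, ?_⟩
  · linear_combination S * hw₁ - β ^ 2 * heq3
  · linear_combination S * hw₁ - α ^ 2 * w ^ 4 * heq1 - 2 * α * β * w ^ 2 * heq2 + β ^ 2 * heq4
  · linear_combination S * hw₁ - α ^ 2 * w ^ 2 * heq1 - 2 * α * β * w * heq2 + β ^ 2 * heq4
  · linear_combination S * hw₁ - α ^ 2 * heq1 - 2 * α * β * heq2 + β ^ 2 * heq4

lemma finrank_linePlane8 {w q a c d : ℂ} (hc : c ≠ 0) :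
    Module.finrank ℂ (linePlane8 w q a c d) = 2 := by
  have hli : LinearIndependent ℂ ![(![1, q, w, w * q, w ^ 2, w ^ 2 * q, 0, 0] : Fin 8 → ℂ),
      ![a, 1, a, 1, a, 1, c, d]] := by
    refine LinearIndependent.pair_iff.mpr fun x y hxy => ?_
    have hy : y = 0 := by simpa [hc] using congrFun hxy 6
    subst hy
    simpa using congrFun hxy 0
  rw [linePlane8, ← Matrix.range_cons_cons_empty, finrank_span_eq_card hli, Fintype.card_fin]

end Quadrics

section Criterion

def orbitU (w q : ℂ) (π : Perm (Fin 3)) (t s : Fin 3 → Bool) : Fin 8 → ℂ :=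
  blockVec (fun b r => boolSign (s b) * (w ^ (π b : ℕ) * cond (r ^^ t b) q 1)) (fun _ => 0)

def orbitV (a c d : ℂ) (t s : Fin 3 → Bool) (e : Bool) : Fin 8 → ℂ :=
  blockVec (fun b r => boolSign (s b) * cond (r ^^ t b) 1 a) (fun r => cond (r ^^ e) d c)

def orbitPlane (w q a c d : ℂ) (π : Perm (Fin 3)) (t s : Fin 3 → Bool) (e : Bool) :
    Submodule ℂ (Fin 8 → ℂ) :=
  Submodule.span ℂ {orbitU w q π t s, orbitV a c d t s e}

structure Nondegenerate (q c d : ℂ) : Prop where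
  q_ne_zero : q ≠ 0
  q_sq_ne_one : q ^ 2 ≠ 1
  c_ne_zero : c ≠ 0
  d_ne_zero : d ≠ 0
  c_sq_ne_d_sq : c ^ 2 ≠ d ^ 2

variable {w q a c d : ℂ}

lemma orbitPlane_addRight (hw : IsPrimitiveRoot w 3) (π : Perm (Fin 3)) (k : Fin 3)
    (t s : Fin 3 → Bool) (e : Bool) :
    orbitPlane w q a c d (π.trans (Equiv.addRight k)) t s e = orbitPlane w q a c d π t s e := by
  have hU : orbitU w q (π.trans (Equiv.addRight k)) t s = w ^ (k : ℕ) • orbitU w q π t s := by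
    simp only [orbitU, smul_blockVec, mul_zero, trans_apply, Equiv.coe_addRight, hw.pow_val_add]
    congr 1; ext; ring
  rw [orbitPlane, orbitPlane, hU, Submodule.span_insert, Submodule.span_insert,
    Submodule.span_singleton_smul_eq]
  exact (pow_ne_zero _ (hw.ne_zero (by norm_num))).isUnit

lemma eq_and_boolSign_mul_pow_eq_of_orbitU_eq_smul (hw : w ≠ 0) (hq : q ^ 2 ≠ 1)
    {π₁ π₂ : Perm (Fin 3)} {t₁ t₂ s₁ s₂ : Fin 3 → Bool} {α : ℂ}
    (h : orbitU w q π₂ t₂ s₂ = α • orbitU w q π₁ t₁ s₁) :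
    t₁ = t₂ ∧ ∀ b, (boolSign (s₂ b) : ℂ) * w ^ (π₂ b : ℕ) =
      α * ((boolSign (s₁ b) : ℂ) * w ^ (π₁ b : ℕ)) := by
  have hb : ∀ b r, (boolSign (s₂ b) : ℂ) * (w ^ (π₂ b : ℕ) * cond (r ^^ t₂ b) q 1) =
      α * ((boolSign (s₁ b) : ℂ) * (w ^ (π₁ b : ℕ) * cond (r ^^ t₁ b) q 1)) := fun b r => by
    simpa [orbitU] using congrFun h (blockIdx b r)
  have ht : t₁ = t₂ := by
    funext b
    have h₀ := hb b (t₁ b)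
    have h₁ := hb b (!t₁ b)
    have hne := mul_ne_zero (boolSign_ne_zero (s₂ b)) (pow_ne_zero (π₂ b : ℕ) hw)
    generalize t₁ b = x₁ at h₀ h₁
    generalize t₂ b = x₂ at h₀ h₁
    cases x₁ <;> cases x₂ <;> simp at h₀ h₁ ⊢ <;>
      exact hq (mul_left_cancel₀ hne (by linear_combination q * h₀ - h₁))
  refine ⟨ht, fun b => ?_⟩
  subst ht
  simpa using hb b (t₁ b)

lemma eq_and_eq_one_of_orbitV_eq (hnd : Nondegenerate q c d) {π : Perm (Fin 3)}
    {t₁ t₂ s₁ s₂ : Fin 3 → Bool} {e₁ e₂ : Bool} {γ δ : ℂ}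
    (h : orbitV a c d t₂ s₂ e₂ = γ • orbitU w q π t₁ s₁ + δ • orbitV a c d t₁ s₁ e₁) :
    e₁ = e₂ ∧ δ = 1 := by
  have hr : ∀ r, cond (r ^^ e₂) d c = δ * cond (r ^^ e₁) d c := fun r => by
    simpa [orbitU, orbitV] using congrFun h (tailIdx r)
  have h₀ := hr false
  have h₁ := hr true
  cases e₁ <;> cases e₂ <;>
    simp only [Bool.false_xor, Bool.true_xor, Bool.not_false, Bool.not_true, cond] at h₀ h₁
  · exact ⟨rfl, mul_right_cancel₀ hnd.c_ne_zero (by linear_combination -h₀)⟩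
  · exact absurd (by linear_combination c * h₁ - d * h₀) hnd.c_sq_ne_d_sq
  · exact absurd (by linear_combination c * h₀ - d * h₁) hnd.c_sq_ne_d_sq
  · exact ⟨rfl, mul_right_cancel₀ hnd.d_ne_zero (by linear_combination -h₀)⟩

lemma eq_of_orbitV_eq (hw : IsPrimitiveRoot w 3) (hq : q ≠ 0) {π : Perm (Fin 3)}
    {t s₁ s₂ : Fin 3 → Bool} {e : Bool} {γ : ℂ}
    (h : orbitV a c d t s₂ e = γ • orbitU w q π t s₁ + orbitV a c d t s₁ e) : s₁ = s₂ := by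
  have hb : ∀ b, (s₂ b = s₁ b ∧ γ * (w ^ (π b : ℕ) * q) = 0) ∨ γ * (w ^ (π b : ℕ) * q) = -2 :=
    fun b => by
      have hb := congrFun h (blockIdx b (!t b))
      simp [orbitU, orbitV] at hb
      exact eq_and_eq_zero_or_eq_neg_two_of_boolSign_eq (by linear_combination hb)
  -- if `γ ≠ 0`, every block changes sign, so `γ ω ^ (π b) q = -2` for all three blocks `b`
  have hγ : γ = 0 := by
    by_contra hγ
    have hz : ∀ b, γ * (w ^ (π b : ℕ) * q) = -2 := fun b => (hb b).resolve_left fun h =>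
      mul_ne_zero hγ (mul_ne_zero (pow_ne_zero _ (hw.ne_zero (by norm_num))) hq) h.2
    have h01 : π 0 = π 1 := Fin.ext <| hw.pow_inj (π 0).is_lt (π 1).is_lt <|
      mul_right_cancel₀ hq <| mul_left_cancel₀ hγ <| (hz 0).trans (hz 1).symm
    exact absurd (π.injective h01) (by decide)
  funext b
  exact ((hb b).resolve_right (by simp [hγ])).1.symm

lemma eq_of_orbitPlane_eq (hw : IsPrimitiveRoot w 3) (hnd : Nondegenerate q c d)
    {π₁ π₂ : Perm (Fin 3)} {t₁ t₂ s₁ s₂ : Fin 3 → Bool} {e₁ e₂ : Bool}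
    (h : orbitPlane w q a c d π₁ t₁ s₁ e₁ = orbitPlane w q a c d π₂ t₂ s₂ e₂) :
    t₁ = t₂ ∧ s₁ = s₂ ∧ e₁ = e₂ ∧ ∃ k, π₂ = π₁.trans (Equiv.addRight k) := by
  have hU : orbitU w q π₂ t₂ s₂ ∈ orbitPlane w q a c d π₁ t₁ s₁ e₁ :=
    h ▸ Submodule.subset_span (by simp)
  have hV : orbitV a c d t₂ s₂ e₂ ∈ orbitPlane w q a c d π₁ t₁ s₁ e₁ :=
    h ▸ Submodule.subset_span (by simp)
  obtain ⟨α, hα⟩ := exists_eq_smul_of_mem_span_pair hU (i := tailIdx false)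
    (by simp [orbitU]) (by simp [orbitU])
    (by cases e₁ <;> simp [orbitV, hnd.c_ne_zero, hnd.d_ne_zero])
  obtain ⟨rfl, hpow⟩ := eq_and_boolSign_mul_pow_eq_of_orbitU_eq_smul
    (hw.ne_zero (by norm_num)) hnd.q_sq_ne_one hα
  obtain ⟨γ, δ, hγδ⟩ := Submodule.mem_span_pair.mp hV
  obtain ⟨rfl, rfl⟩ := eq_and_eq_one_of_orbitV_eq hnd hγδ.symm
  rw [one_smul] at hγδ
  obtain rfl := eq_of_orbitV_eq hw hnd.q_ne_zero hγδ.symm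
  have hshift : ∀ b, w ^ (π₂ b : ℕ) = α * w ^ (π₁ b : ℕ) := fun b =>
    mul_left_cancel₀ (boolSign_ne_zero (s₁ b)) (by linear_combination hpow b)
  exact ⟨rfl, rfl, rfl, π₂ 0 - π₁ 0,
    Equiv.ext fun b => hw.eq_add_of_pow_val_eq_mul hshift 0 b⟩

end Criterion

section Orbit

variable {w q a c d : ℂ}

def orbit (w q a c d : ℂ) : Set (Submodule ℂ (Fin 8 → ℂ)) :=
  {W | ∃ σ ∈ Gperm8, ∃ h ∈ Hsigns8,
    Submodule.map (permMap8 σ) (Submodule.map (diagMap8 h) (linePlane8 w q a c d)) = W}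

lemma permMap8_one : permMap8 1 = LinearMap.id := LinearMap.ext fun _ => rfl

lemma diagMap8_one : diagMap8 1 = LinearMap.id := by
  ext x i; simp [diagMap8_apply]

lemma permMap8_injective (σ : Perm (Fin 8)) : Function.Injective (permMap8 σ) :=
  LinearMap.funLeft_injective_of_surjective _ _ _ σ.surjective

lemma diagMap8_injective (h : Fin 8 → ℂˣ) : Function.Injective (diagMap8 h) :=
  fun _ _ hxy => funext fun i => (Units.mul_right_inj (h i)).mp (congrFun hxy i)

lemma linePlane8_eq_span_blockVec (w q a c d : ℂ) :
    linePlane8 w q a c d = Submodule.span ℂ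
      {blockVec (fun b r => w ^ (b : ℕ) * cond r q 1) (fun _ => 0),
        blockVec (fun _ r => cond r 1 a) (fun r => cond r d c)} := by
  have hu : ![1, q, w, w * q, w ^ 2, w ^ 2 * q, 0, 0] =
      blockVec (fun b r => w ^ (b : ℕ) * cond r q 1) (fun _ => 0) := by
    funext i; fin_cases i <;> simp [blockVec]
  have hv : ![a, 1, a, 1, a, 1, c, d] = blockVec (fun _ r => cond r 1 a) (fun r => cond r d c) := by
    funext i; fin_cases i <;> rfl
  rw [linePlane8, hu, hv]

lemma map_linePlane8 {σ : Perm (Fin 8)} {h : Fin 8 → ℂˣ} {π : Perm (Fin 3)}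
    {t s : Fin 3 → Bool} {e : Bool} (hσ : ⇑σ = blockPerm π t e) (hh : h = blockSigns s) :
    ((linePlane8 w q a c d).map (diagMap8 h)).map (permMap8 σ) =
      orbitPlane w q a c d π t (s ∘ π) e := by
  have key : ∀ x, permMap8 σ (diagMap8 h x) =
      ((Units.val ∘ blockSigns s) * x) ∘ blockPerm π t e := by
    intro x; subst hh; rw [← hσ]; rfl
  rw [linePlane8_eq_span_blockVec, Submodule.map_span, Submodule.map_span, Set.image_pair,
    Set.image_pair, key, key, blockSigns, comp_blockVec, blockVec_mul, blockVec_mul,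
    blockVec_comp_blockPerm, blockVec_comp_blockPerm]
  simp [orbitPlane, orbitU, orbitV]

lemma linePlane8_eq_orbitPlane :
    linePlane8 w q a c d = orbitPlane w q a c d 1 (fun _ => false) (fun _ => false) false := by
  simpa [permMap8_one, diagMap8_one] using
    map_linePlane8 (w := w) (q := q) (a := a) (c := c) (d := d) (σ := 1)
      (Perm.coe_one.trans blockPerm_one.symm) blockSigns_false.symm

lemma orbit_eq_image (hw : IsPrimitiveRoot w 3) :
    orbit w q a c d = (fun p : Perm (Fin 3) × (Fin 3 → Bool) × (Fin 3 → Bool) × Bool =>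
      orbitPlane w q a c d p.1 p.2.1 p.2.2.1 p.2.2.2) '' {p | p.1 0 = 0} := by
  ext W
  constructor
  · rintro ⟨σ, hσ, h, hh, rfl⟩
    obtain ⟨π, t, e, hσ⟩ := exists_blockPerm_of_mem_Gperm8 hσ
    obtain ⟨s, rfl⟩ := exists_blockSigns_of_mem_Hsigns8 hh
    set π' := π.trans (Equiv.subRight (π 0))
    have hπ' : π'.trans (Equiv.addRight (π 0)) = π := by ext; simp [π']
    refine ⟨(π', t, s ∘ π, e), by simp [π'], ?_⟩
    calc orbitPlane w q a c d π' t (s ∘ π) e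
        = orbitPlane w q a c d (π'.trans (Equiv.addRight (π 0))) t (s ∘ π) e :=
          (orbitPlane_addRight hw _ _ _ _ _).symm
      _ = _ := by rw [hπ', map_linePlane8 hσ rfl]
  · rintro ⟨⟨π, t, s, e⟩, -, rfl⟩
    obtain ⟨σ, hσ, hσπ⟩ := exists_mem_Gperm8_coe_eq π t e
    refine ⟨σ, hσ, _, blockSigns_mem_Hsigns8 (s ∘ ⇑π⁻¹), ?_⟩
    have hs : (s ∘ ⇑π⁻¹) ∘ ⇑π = s := by funext; simp
    rw [map_linePlane8 hσπ rfl, hs]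

lemma injOn_orbitPlane (hw : IsPrimitiveRoot w 3) (hnd : Nondegenerate q c d) :
    Set.InjOn (fun p : Perm (Fin 3) × (Fin 3 → Bool) × (Fin 3 → Bool) × Bool =>
      orbitPlane w q a c d p.1 p.2.1 p.2.2.1 p.2.2.2) {p | p.1 0 = 0} := by
  rintro ⟨π, t, s, e⟩ hπ ⟨π', t', s', e'⟩ hπ' h
  obtain ⟨rfl, rfl, rfl, k, rfl⟩ := eq_of_orbitPlane_eq hw hnd h
  simp only [Set.mem_ofPred_eq, trans_apply, Equiv.coe_addRight] at hπ hπ'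
  obtain rfl : k = 0 := by simpa [hπ] using hπ'
  ext <;> simp

lemma ncard_setOf_fst_apply_zero :
    {p : Perm (Fin 3) × (Fin 3 → Bool) × (Fin 3 → Bool) × Bool | p.1 0 = 0}.ncard = 256 := by
  rw [show {p : Perm (Fin 3) × (Fin 3 → Bool) × (Fin 3 → Bool) × Bool | p.1 0 = 0} =
    {π | π 0 = 0} ×ˢ Set.univ by ext; simp, Set.ncard_prod, Set.ncard_univ]
  have hperm : {π : Perm (Fin 3) | π 0 = 0}.ncard = 2 := by
    rw [Set.ncard_eq_toFinset_card']; decide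
  simp [hperm]

lemma ncard_orbit (hw : IsPrimitiveRoot w 3) (hnd : Nondegenerate q c d) :
    (orbit w q a c d).ncard = 256 := by
  rw [orbit_eq_image hw, (injOn_orbitPlane hw hnd).ncard_image, ncard_setOf_fst_apply_zero]

lemma finrank_eq_two_and_isOnX_of_mem_orbit {l m : ℂ} (hw : IsPrimitiveRoot w 3)
    (h : lineEqs8 l m q a c d) (hc : c ≠ 0) {W : Submodule ℂ (Fin 8 → ℂ)}
    (hW : W ∈ orbit w q a c d) : Module.finrank ℂ W = 2 ∧ ∀ x ∈ W, IsOnX l m x := by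
  obtain ⟨σ, hσ, g, hg, rfl⟩ := hW
  refine ⟨?_, fun x hx => ?_⟩
  · rw [← (Submodule.equivMapOfInjective _ (permMap8_injective σ) _).finrank_eq,
      ← (Submodule.equivMapOfInjective _ (diagMap8_injective g) _).finrank_eq,
      finrank_linePlane8 hc]
  · obtain ⟨y, hy, rfl⟩ := Submodule.mem_map.mp hx
    obtain ⟨z, hz, rfl⟩ := Submodule.mem_map.mp hy
    rw [isOnX_permMap8_iff hσ, isOnX_diagMap8_iff hg]
    exact isOnX_of_mem_linePlane8 hw h hz

lemma map_eq_self_of_map_map_eq_self (hw : IsPrimitiveRoot w 3) (hnd : Nondegenerate q c d)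
    {σ : Perm (Fin 8)} (hσ : σ ∈ Gperm8) {g : Fin 8 → ℂˣ} (hg : g ∈ Hsigns8)
    (hfix : ((linePlane8 w q a c d).map (diagMap8 g)).map (permMap8 σ) = linePlane8 w q a c d) :
    (linePlane8 w q a c d).map (permMap8 σ) = linePlane8 w q a c d ∧
      (linePlane8 w q a c d).map (diagMap8 g) = linePlane8 w q a c d := by
  obtain ⟨π, t, e, hσπ⟩ := exists_blockPerm_of_mem_Gperm8 hσ
  obtain ⟨s, rfl⟩ := exists_blockSigns_of_mem_Hsigns8 hg
  have hs : s = fun _ => false := by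
    have h := hfix
    rw [map_linePlane8 hσπ rfl, linePlane8_eq_orbitPlane] at h
    obtain ⟨-, hs, -⟩ := eq_of_orbitPlane_eq hw hnd h
    funext b
    simpa using congrFun hs (π⁻¹ b)
  have hdiag : (linePlane8 w q a c d).map (diagMap8 (blockSigns s)) = linePlane8 w q a c d := by
    rw [hs, blockSigns_false, diagMap8_one, Submodule.map_id]
  rw [hdiag] at hfix
  exact ⟨hfix, hdiag⟩

end Orbit

lemma c_sq_ne_d_sq_of_lineEqs8 {l m q a c d : ℂ} (hm : m ^ 2 ≠ 1)
    (hE : l * q * (1 - l ^ 2) ≠ 0) (h : lineEqs8 l m q a c d) : c ^ 2 ≠ d ^ 2 := by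
  obtain ⟨heq1, heq2, heq3, heq4⟩ := h
  intro hcd
  -- with `E = λ q (1 - λ²)`, `c² = d²` gives `c² X = d² X = -3E` and `μ c d X = 3E`, so `μ² = 1`
  set X := (1 + l * q) ^ 2
  have k2 : (a ^ 2 - l * a + 1) * X = 3 * (l * q * (1 - l ^ 2)) := by
    linear_combination (a * (1 + l * q) - (l + q) - l * (1 + l * q)) * heq2 +
      (1 + 2 * l ^ 2) * heq1
  have hc2 : c ^ 2 * X = -3 * (l * q * (1 - l ^ 2)) := by
    linear_combination X / 2 * heq4 + X / 2 * hcd - k2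
  have hd2 : d ^ 2 * X = -3 * (l * q * (1 - l ^ 2)) := by
    linear_combination hc2 - X * hcd
  have hmcd : m * (c * d) * X = 3 * (l * q * (1 - l ^ 2)) := by
    linear_combination X / 2 * heq3 +
      (3 / 2 : ℂ) * ((a * (1 + l * q) - (l + q)) * heq2 + (1 + l ^ 2) * heq1)
  have hkey : m ^ 2 * (c ^ 2 * X) * (d ^ 2 * X) = (m * (c * d) * X) ^ 2 := by ring
  rw [hc2, hd2, hmcd] at hkey
  exact hm (mul_right_cancel₀ (pow_ne_zero 2 hE) (by linear_combination hkey / 9))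

lemma nondegenerate_of_lineEqs8 {l m q a c d : ℂ} (hlm : l * (l ^ 2 - 1) * (m ^ 2 - 1) ≠ 0)
    (h : lineEqs8 l m q a c d) : Nondegenerate q c d := by
  have ⟨heq1, heq2, heq3, _⟩ := h
  have hl : l ≠ 0 := fun h => hlm (by simp [h])
  have hl2 : l ^ 2 ≠ 1 := fun h => hlm (by simp [h])
  have hm2 : m ^ 2 ≠ 1 := fun h => hlm (by simp [h])
  have hq0 : q ≠ 0 := by rintro rfl; norm_num at heq1
  have hE : l * q * (1 - l ^ 2) ≠ 0 :=
    mul_ne_zero (mul_ne_zero hl hq0) fun h => hl2 (by linear_combination -h)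
  have k1 : (a ^ 2 + 1) * (1 + l * q) ^ 2 = 2 * (l * q * (1 - l ^ 2)) := by
    linear_combination (a * (1 + l * q) - (l + q)) * heq2 + (1 + l ^ 2) * heq1
  have ha2 : a ^ 2 + 1 ≠ 0 := fun h0 =>
    hE (by linear_combination (-1 / 2 : ℂ) * k1 + (1 + l * q) ^ 2 / 2 * h0)
  have hcd : c * d ≠ 0 := fun h0 =>
    ha2 (by linear_combination (-1 / 3 : ℂ) * heq3 + 2 * m / 3 * h0)
  refine ⟨hq0, fun hq => hl2 ?_, left_ne_zero_of_mul hcd, right_ne_zero_of_mul hcd,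
    c_sq_ne_d_sq_of_lineEqs8 hm2 hE h⟩
  linear_combination -l ^ 2 * hq + (l * q - 1) / 2 * (heq1 - hq)

end LinesOnX

open LinesOnX

theorem stmt_16 (w : ℂ) (hw : IsPrimitiveRoot w 3) :
    ∃ P : MvPolynomial (Fin 2) ℂ, P ≠ 0 ∧
      ∀ l m : ℂ, MvPolynomial.eval ![l, m] P ≠ 0 →
        ∀ q a c d : ℂ, lineEqs8 l m q a c d →
          ({W : Submodule ℂ (Fin 8 → ℂ) |
              ∃ σ ∈ Gperm8, ∃ h ∈ Hsigns8,
                Submodule.map (permMap8 σ)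
                  (Submodule.map (diagMap8 h) (linePlane8 w q a c d)) = W}.ncard = 256 ∧
            (∀ W : Submodule ℂ (Fin 8 → ℂ),
              (∃ σ ∈ Gperm8, ∃ h ∈ Hsigns8,
                Submodule.map (permMap8 σ)
                  (Submodule.map (diagMap8 h) (linePlane8 w q a c d)) = W) →
              Module.finrank ℂ W = 2 ∧
                ∀ x ∈ W, Q1 m x = 0 ∧ Q2 l x = 0 ∧ Q3 l x = 0 ∧ Q4 l x = 0) ∧
            ∀ σ ∈ Gperm8, ∀ h ∈ Hsigns8,
              Submodule.map (permMap8 σ)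
                  (Submodule.map (diagMap8 h) (linePlane8 w q a c d)) =
                  linePlane8 w q a c d →
                Submodule.map (permMap8 σ) (linePlane8 w q a c d) = linePlane8 w q a c d ∧
                Submodule.map (diagMap8 h) (linePlane8 w q a c d) = linePlane8 w q a c d) := by
  open MvPolynomial in
  refine ⟨X 0 * (X 0 ^ 2 - 1) * (X 1 ^ 2 - 1), fun hP => ?_, fun l m hP q a c d h => ?_⟩
  · have h22 := congrArg (eval ![2, 2]) hP
    norm_num at h22
  have hnd := nondegenerate_of_lineEqs8 (by simpa using hP) h
  exact ⟨ncard_orbit hw hnd,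
    fun W hW => finrank_eq_two_and_isOnX_of_mem_orbit hw h hnd.c_ne_zero hW,
    fun σ hσ g hg hfix => map_eq_self_of_map_map_eq_self hw hnd hσ hg hfix⟩
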